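/- Assume N ≥ 4, M ≥ 4, and let the payoff parameters satisfy p3 > p1 > p4 > p2 (prisoner's dilemma). Let W ⊆ V be a set of nodes frozen at cooperation with |W| ≤ 3, and let S₀ be the configuration with S₀(v) = C for v ∈ W and S₀(v) = D for v ∉ W. Then along every trajectory of the W-frozen imitation dynamics — i.e., every sequence of configurations (S_t)_{t≥0} with the given S₀ and S_{t+1} ∈ R_W(S_t) for all t — one has S_t ≠ S_C for every t; i.e., fewer than 4 fixed cooperation nodes can never drive the population to total cooperation. -/
import Mathlib


open MeasureTheory

namespace EvolGame

/-- A strategy: cooperation `C` or defection `D`. -/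
inductive Strat : Type
  | C : Strat
  | D : Strat
  deriving DecidableEq

/-- Node set of the toroidal grid `G_{N,M}`. -/
abbrev Node (N M : ℕ) := ZMod N × ZMod M

/-- A strategy configuration. -/
abbrev Config (N M : ℕ) := Node N M → Strat

/-- Adjacency on the toroidal grid. -/
def adj {N M : ℕ} (u v : Node N M) : Prop :=
  u - v = (1, 0) ∨ u - v = (-1, 0) ∨ u - v = (0, 1) ∨ u - v = (0, -1)

/-- The (at most four) neighbors of a node. -/
def neighbors {N M : ℕ} (v : Node N M) : Finset (Node N M) :=
  {v + (1, 0), v + (-1, 0), v + (0, 1), v + (0, -1)}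

/-- Number of cooperating neighbors of `v` under configuration `S`. -/
def coopCount {N M : ℕ} (S : Config N M) (v : Node N M) : ℕ :=
  ((neighbors v).filter (fun u => S u = Strat.C)).card

/-- Payoff of node `v` under configuration `S` with payoff parameters `p1,p2,p3,p4`. -/
def payoff (p1 p2 p3 p4 : ℝ) {N M : ℕ} (S : Config N M) (v : Node N M) : ℝ :=
  if S v = Strat.C then
    (coopCount S v : ℝ) * p1 + (4 - (coopCount S v : ℝ)) * p2
  else
    (coopCount S v : ℝ) * p3 + (4 - (coopCount S v : ℝ)) * p4

/-- A control assigns to each node one of its neighbors. -/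
def IsControl {N M : ℕ} (c : Node N M → Node N M) : Prop :=
  ∀ v, adj (c v) v

open Classical in
/-- The controlled update `F(S,c)`. -/
noncomputable def F (p1 p2 p3 p4 : ℝ) {N M : ℕ} (S : Config N M)
    (c : Node N M → Node N M) : Config N M :=
  fun v =>
    if payoff p1 p2 p3 p4 S v < payoff p1 p2 p3 p4 S (c v) then S (c v) else S v

/-- The set `R(S)` of configurations reachable from `S` in one imitation step. -/
def Rset (p1 p2 p3 p4 : ℝ) {N M : ℕ} (S : Config N M) : Set (Config N M) :=
  {S' | ∀ v, S' v = S v ∨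
    ∃ u, adj u v ∧ S' v = S u ∧ payoff p1 p2 p3 p4 S v < payoff p1 p2 p3 p4 S u}

/-- `Ω*`: adjacent nodes with different strategies have equal payoffs. -/
def OmegaStar (p1 p2 p3 p4 : ℝ) (N M : ℕ) : Set (Config N M) :=
  {S | ∀ u v, adj u v → S u ≠ S v →
    payoff p1 p2 p3 p4 S u = payoff p1 p2 p3 p4 S v}

/-- Controlled trajectory of the CEG. -/
noncomputable def traj (p1 p2 p3 p4 : ℝ) {N M : ℕ} (S0 : Config N M)
    (c : ℕ → Node N M → Node N M) : ℕ → Config N M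
  | 0 => S0
  | t + 1 => F p1 p2 p3 p4 (traj p1 p2 p3 p4 S0 c t) (c t)

/-- `A` is reachable from `S0` under the CEG within `T` steps. -/
def ReachableWithin (p1 p2 p3 p4 : ℝ) {N M : ℕ} (A : Set (Config N M))
    (S0 : Config N M) (T : ℕ) : Prop :=
  ∃ t ≤ T, ∃ c : ℕ → Node N M → Node N M,
    (∀ s, IsControl (c s)) ∧ traj p1 p2 p3 p4 S0 c t ∈ A

/-- The discrete σ-algebra on the finite configuration space. -/
instance {N M : ℕ} : MeasurableSpace (Config N M) := ⊤

/-- `μ` is the law of the time-homogeneous Markov chain with kernel `κ` started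
at `S0`, characterized by its finite-dimensional (cylinder) distributions. -/
def IsChainLaw {N M : ℕ} (κ : Config N M → PMF (Config N M)) (S0 : Config N M)
    (μ : Measure (ℕ → Config N M)) : Prop :=
  IsProbabilityMeasure μ ∧
  ∀ (t : ℕ) (s : ℕ → Config N M), s 0 = S0 →
    μ {ω | ∀ i ≤ t, ω i = s i} = ∏ i ∈ Finset.range t, κ (s i) (s (i + 1))

/-- An admissible imitation kernel with margin `ε`. -/
def IsAdmissible (p1 p2 p3 p4 : ℝ) {N M : ℕ} (ε : ℝ)
    (κ : Config N M → PMF (Config N M)) : Prop :=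
  (∀ (S : Config N M) (c : Node N M → Node N M), IsControl c →
      ENNReal.ofReal ε ≤ κ S (F p1 p2 p3 p4 S c)) ∧
  (∀ S : Config N M, ∑' S' : Rset p1 p2 p3 p4 S, κ S (S' : Config N M) = 1)

open Classical in
/-- The `W`-frozen controlled update. -/
noncomputable def FW (p1 p2 p3 p4 : ℝ) {N M : ℕ} (W : Set (Node N M))
    (S : Config N M) (c : Node N M → Node N M) : Config N M :=
  fun v => if v ∈ W then S v else F p1 p2 p3 p4 S c v

/-- The `W`-frozen one-step reach set `R_W(S)`. -/
def RsetW (p1 p2 p3 p4 : ℝ) {N M : ℕ} (W : Set (Node N M)) (S : Config N M) :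
    Set (Config N M) :=
  {S' | (∀ v ∈ W, S' v = S v) ∧
    ∀ v ∉ W, S' v = S v ∨
      ∃ u, adj u v ∧ S' v = S u ∧ payoff p1 p2 p3 p4 S v < payoff p1 p2 p3 p4 S u}

/-- Controlled trajectory of the `W`-frozen CEG. -/
noncomputable def trajW (p1 p2 p3 p4 : ℝ) {N M : ℕ} (W : Set (Node N M))
    (S0 : Config N M) (c : ℕ → Node N M → Node N M) : ℕ → Config N M
  | 0 => S0
  | t + 1 => FW p1 p2 p3 p4 W (trajW p1 p2 p3 p4 W S0 c t) (c t)

/-- `A` is reachable from `S0` under the `W`-frozen CEG within `T` steps. -/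
def ReachableWithinW (p1 p2 p3 p4 : ℝ) {N M : ℕ} (W : Set (Node N M))
    (A : Set (Config N M)) (S0 : Config N M) (T : ℕ) : Prop :=
  ∃ t ≤ T, ∃ c : ℕ → Node N M → Node N M,
    (∀ s, IsControl (c s)) ∧ trajW p1 p2 p3 p4 W S0 c t ∈ A

/-- A `W`-frozen admissible imitation kernel with margin `ε`. -/
def IsAdmissibleW (p1 p2 p3 p4 : ℝ) {N M : ℕ} (W : Set (Node N M)) (ε : ℝ)
    (κ : Config N M → PMF (Config N M)) : Prop :=
  (∀ (S : Config N M) (c : Node N M → Node N M), IsControl c →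
      ENNReal.ofReal ε ≤ κ S (FW p1 p2 p3 p4 W S c)) ∧
  (∀ S : Config N M, ∑' S' : RsetW p1 p2 p3 p4 W S, κ S (S' : Config N M) = 1)


/-! ### Auxiliary material for Statement 14 -/

section Aux14

variable {N M : ℕ}

lemma natCast_ne_zero_of_lt {n k : ℕ} (hn : 4 ≤ n) (hk0 : k ≠ 0) (hk : k < 4) :
    ((k : ZMod n)) ≠ 0 := by
  intro h
  rw [ZMod.natCast_eq_zero_iff] at h
  have := Nat.le_of_dvd (Nat.pos_of_ne_zero hk0) h
  omega

lemma zmod_one_ne (hn : 4 ≤ N) : (1 : ZMod N) ≠ 0 := by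
  have := natCast_ne_zero_of_lt (n := N) (k := 1) hn (by omega) (by omega)
  simpa using this

lemma zmod_two_ne (hn : 4 ≤ N) : (2 : ZMod N) ≠ 0 := by
  have := natCast_ne_zero_of_lt (n := N) (k := 2) hn (by omega) (by omega)
  simpa using this

lemma zmod_three_ne (hn : 4 ≤ N) : (3 : ZMod N) ≠ 0 := by
  have := natCast_ne_zero_of_lt (n := N) (k := 3) hn (by omega) (by omega)
  simpa using this

/-- Adjacency in component form. -/
lemma adj_iff {u v : Node N M} :
    adj u v ↔ (u.1 - v.1 = 1 ∧ u.2 - v.2 = 0) ∨ (u.1 - v.1 = -1 ∧ u.2 - v.2 = 0) ∨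
      (u.1 - v.1 = 0 ∧ u.2 - v.2 = 1) ∨ (u.1 - v.1 = 0 ∧ u.2 - v.2 = -1) := by
  simp [adj, Prod.ext_iff]

lemma adj_symm {u v : Node N M} (h : adj u v) : adj v u := by
  rw [adj_iff] at h ⊢
  rcases h with ⟨h1, h2⟩ | ⟨h1, h2⟩ | ⟨h1, h2⟩ | ⟨h1, h2⟩
  · exact Or.inr (Or.inl ⟨by linear_combination -h1, by linear_combination -h2⟩)
  · exact Or.inl ⟨by linear_combination -h1, by linear_combination -h2⟩
  · exact Or.inr (Or.inr (Or.inr ⟨by linear_combination -h1, by linear_combination -h2⟩))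
  · exact Or.inr (Or.inr (Or.inl ⟨by linear_combination -h1, by linear_combination -h2⟩))

lemma adj_irrefl (hN : 4 ≤ N) (hM : 4 ≤ M) {v : Node N M} : ¬ adj v v := by
  rw [adj_iff]
  rintro (⟨h1, _⟩ | ⟨h1, _⟩ | ⟨_, h2⟩ | ⟨_, h2⟩)
  · exact zmod_one_ne hN (by linear_combination -h1)
  · exact zmod_one_ne hN (by linear_combination h1)
  · exact zmod_one_ne hM (by linear_combination -h2)
  · exact zmod_one_ne hM (by linear_combination h2)

/-- The toroidal grid with `N, M ≥ 4` has no triangles. -/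
lemma no_triangle (hN : 4 ≤ N) (hM : 4 ≤ M) {a b c : Node N M}
    (hab : adj a b) (hbc : adj b c) (hac : adj a c) : False := by
  rw [adj_iff] at hab hbc hac
  have N1 := zmod_one_ne (N := N) hN
  have N2 := zmod_two_ne (N := N) hN
  have N3 := zmod_three_ne (N := N) hN
  have M1 := zmod_one_ne (N := M) hM
  have M2 := zmod_two_ne (N := M) hM
  have M3 := zmod_three_ne (N := M) hM
  rcases hab with ⟨a1, a2⟩ | ⟨a1, a2⟩ | ⟨a1, a2⟩ | ⟨a1, a2⟩ <;>
    rcases hbc with ⟨b1, b2⟩ | ⟨b1, b2⟩ | ⟨b1, b2⟩ | ⟨b1, b2⟩ <;>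
      rcases hac with ⟨c1, c2⟩ | ⟨c1, c2⟩ | ⟨c1, c2⟩ | ⟨c1, c2⟩ <;>
        first
          | exact N1 (by linear_combination a1 + b1 - c1)
          | exact N1 (by linear_combination c1 - a1 - b1)
          | exact N2 (by linear_combination a1 + b1 - c1)
          | exact N2 (by linear_combination c1 - a1 - b1)
          | exact N3 (by linear_combination a1 + b1 - c1)
          | exact N3 (by linear_combination c1 - a1 - b1)
          | exact M1 (by linear_combination a2 + b2 - c2)
          | exact M1 (by linear_combination c2 - a2 - b2)
          | exact M2 (by linear_combination a2 + b2 - c2)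
          | exact M2 (by linear_combination c2 - a2 - b2)
          | exact M3 (by linear_combination a2 + b2 - c2)
          | exact M3 (by linear_combination c2 - a2 - b2)

lemma mem_neighbors_iff {u v : Node N M} : u ∈ neighbors v ↔ adj u v := by
  simp only [neighbors, Finset.mem_insert, Finset.mem_singleton, adj_iff, Prod.ext_iff,
    Prod.fst_add, Prod.snd_add]
  constructor
  · rintro (h | h | h | h) <;>
      [exact Or.inl ⟨by linear_combination h.1, by linear_combination h.2⟩;
       exact Or.inr (Or.inl ⟨by linear_combination h.1, by linear_combination h.2⟩);
       exact Or.inr (Or.inr (Or.inl ⟨by linear_combination h.1, by linear_combination h.2⟩));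
       exact Or.inr (Or.inr (Or.inr ⟨by linear_combination h.1, by linear_combination h.2⟩))]
  · rintro (⟨h1, h2⟩ | ⟨h1, h2⟩ | ⟨h1, h2⟩ | ⟨h1, h2⟩)
    · exact Or.inl ⟨by linear_combination h1, by linear_combination h2⟩
    · exact Or.inr (Or.inl ⟨by linear_combination h1, by linear_combination h2⟩)
    · exact Or.inr (Or.inr (Or.inl ⟨by linear_combination h1, by linear_combination h2⟩))
    · exact Or.inr (Or.inr (Or.inr ⟨by linear_combination h1, by linear_combination h2⟩))

/-- A hub: a node of `W` with two distinct `W`-neighbors. -/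
def Hub (W : Finset (Node N M)) (w : Node N M) : Prop :=
  w ∈ W ∧ ∃ w1 ∈ W, ∃ w2 ∈ W, w1 ≠ w2 ∧ adj w1 w ∧ adj w2 w

/-- The confinement invariant: every cooperator outside `W` is adjacent to a hub. -/
def Inv (W : Finset (Node N M)) (S : Config N M) : Prop :=
  ∀ v, S v = Strat.C → v ∈ W ∨ ∃ w, Hub W w ∧ adj w v

lemma hub_mem_cases (hN : 4 ≤ N) (hM : 4 ≤ M) {W : Finset (Node N M)} (hW : W.card ≤ 3)
    {h : Node N M} (hh : Hub W h) : ∀ x ∈ W, x = h ∨ adj x h := by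
  obtain ⟨hmem, w1, hw1, w2, hw2, hne, a1, a2⟩ := hh
  have h1 : w1 ≠ h := fun e => adj_irrefl hN hM (e ▸ a1)
  have h2 : w2 ≠ h := fun e => adj_irrefl hN hM (e ▸ a2)
  have hsub : ({h, w1, w2} : Finset (Node N M)) ⊆ W := by
    intro x hx
    simp only [Finset.mem_insert, Finset.mem_singleton] at hx
    rcases hx with rfl | rfl | rfl <;> assumption
  have hcard : ({h, w1, w2} : Finset (Node N M)).card = 3 := by
    rw [Finset.card_insert_of_notMem (by simp [h1.symm, h2.symm]),
      Finset.card_insert_of_notMem (by simp [hne]), Finset.card_singleton]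
  have heq : ({h, w1, w2} : Finset (Node N M)) = W :=
    Finset.eq_of_subset_of_card_le hsub (by omega)
  intro x hx
  rw [← heq] at hx
  simp only [Finset.mem_insert, Finset.mem_singleton] at hx
  rcases hx with rfl | rfl | rfl
  · exact Or.inl rfl
  · exact Or.inr a1
  · exact Or.inr a2

lemma hub_unique (hN : 4 ≤ N) (hM : 4 ≤ M) {W : Finset (Node N M)} (hW : W.card ≤ 3)
    {h h' : Node N M} (hh : Hub W h) (hh' : Hub W h') : h = h' := by
  by_contra hne
  have hadj : adj h' h := by
    rcases hub_mem_cases hN hM hW hh h' hh'.1 with e | e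
    · exact absurd e.symm hne
    · exact e
  obtain ⟨_, w1, hw1, w2, hw2, hw12, a1, a2⟩ := hh'
  rcases hub_mem_cases hN hM hW hh w1 hw1 with he1 | e1
  · rcases hub_mem_cases hN hM hW hh w2 hw2 with he2 | e2
    · exact hw12 (he1.trans he2.symm)
    · exact no_triangle hN hM a2 hadj e2
  · exact no_triangle hN hM a1 hadj e1

lemma card_neighbors_le (v : Node N M) : (neighbors v).card ≤ 4 := by
  rw [neighbors]
  have b2 : ({v + (0,1), v + (0,-1)} : Finset (Node N M)).card ≤ 2 :=
    (Finset.card_insert_le _ _).trans (by simp)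
  have b3 : (insert (v + (-1,0)) {v + (0,1), v + (0,-1)} : Finset (Node N M)).card ≤ 3 :=
    (Finset.card_insert_le _ _).trans (by omega)
  exact (Finset.card_insert_le _ _).trans (by omega)

lemma coopCount_le_four (S : Config N M) (v : Node N M) : coopCount S v ≤ 4 :=
  (Finset.card_filter_le _ _).trans (card_neighbors_le v)

/-- From the payoff comparison: a defector only imitates a cooperator with strictly
more cooperating neighbors. -/
lemma count_lt (p1 p2 p3 p4 : ℝ) (h31 : p3 > p1) (h14 : p1 > p4) (h42 : p4 > p2)
    {S : Config N M} {u v : Node N M} (hv : S v ≠ Strat.C) (hu : S u = Strat.C)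
    (hlt : payoff p1 p2 p3 p4 S v < payoff p1 p2 p3 p4 S u) :
    coopCount S v < coopCount S u := by
  rw [payoff, payoff, if_neg hv, if_pos hu] at hlt
  by_contra hle
  push_neg at hle
  have hle' : (coopCount S u : ℝ) ≤ (coopCount S v : ℝ) := by exact_mod_cast hle
  have h4 : (coopCount S v : ℝ) ≤ 4 := by exact_mod_cast coopCount_le_four S v
  have h0 : (0 : ℝ) ≤ (coopCount S v : ℝ) := Nat.cast_nonneg _
  have A : ((coopCount S v : ℝ) - (coopCount S u : ℝ)) * (p1 - p2) ≥ 0 :=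
    mul_nonneg (by linarith) (by linarith)
  have B : (coopCount S v : ℝ) * (p3 - p1) ≥ 0 := mul_nonneg h0 (by linarith)
  have C : (4 - (coopCount S v : ℝ)) * (p4 - p2) ≥ 0 :=
    mul_nonneg (by linarith) (by linarith)
  nlinarith [A, B, C, hlt]

lemma coopCount_pos {S : Config N M} {u v : Node N M} (hadj : adj u v)
    (hu : S u = Strat.C) : 1 ≤ coopCount S v := by
  rw [coopCount]
  exact Finset.card_pos.mpr ⟨u, Finset.mem_filter.mpr ⟨mem_neighbors_iff.mpr hadj, hu⟩⟩

lemma two_coop_neighbors {S : Config N M} {u : Node N M} (h : 2 ≤ coopCount S u) :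
    ∃ x y, x ≠ y ∧ adj x u ∧ adj y u ∧ S x = Strat.C ∧ S y = Strat.C := by
  rw [coopCount] at h
  obtain ⟨x, hx, y, hy, hxy⟩ := Finset.one_lt_card.mp h
  rw [Finset.mem_filter] at hx hy
  exact ⟨x, y, hxy, mem_neighbors_iff.mp hx.1, mem_neighbors_iff.mp hy.1, hx.2, hy.2⟩

/-- Key combinatorial step: under the invariant, a cooperator with two distinct
cooperating neighbors must be a hub. -/
lemma hub_of_two (hN : 4 ≤ N) (hM : 4 ≤ M) {W : Finset (Node N M)} (hW : W.card ≤ 3)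
    {S : Config N M} (hInv : Inv W S) {u : Node N M} (hu : S u = Strat.C)
    {x y : Node N M} (hxy : x ≠ y) (hxu : adj x u) (hyu : adj y u)
    (hx : S x = Strat.C) (hy : S y = Strat.C) : Hub W u := by
  by_cases huW : u ∈ W
  · -- If some cooperating neighbor of u lies outside W, u is adjacent to its hub h',
    -- and u = h', as otherwise u, h' ∈ W, adj u h' yields a triangle with z.
    have key : ∀ z, adj z u → S z = Strat.C → z ∉ W → Hub W u := by
      intro z hzu hz hzW
      rcases hInv z hz with hzW' | ⟨h', hh', hadj⟩
      · exact absurd hzW' hzW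
      by_cases he : u = h'
      · exact he ▸ hh'
      · rcases hub_mem_cases hN hM hW hh' u huW with e | e
        · exact absurd e he
        · exact (no_triangle hN hM hzu e (adj_symm hadj)).elim
    by_cases hxW : x ∈ W
    · by_cases hyW : y ∈ W
      · exact ⟨huW, x, hxW, y, hyW, hxy, hxu, hyu⟩
      · exact key y hyu hy hyW
    · exact key x hxu hx hxW
  · -- u outside W: adjacent to a hub h; both x and y must then equal h, contradiction.
    rcases hInv u hu with h | ⟨h, hh, hadj⟩
    · exact absurd h huW
    have key : ∀ z, adj z u → S z = Strat.C → z = h := by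
      intro z hzu hz
      by_cases hzW : z ∈ W
      · rcases hub_mem_cases hN hM hW hh z hzW with e | e
        · exact e
        · exact (no_triangle hN hM e hadj hzu).elim
      · rcases hInv z hz with e | ⟨h', hh', hadj'⟩
        · exact absurd e hzW
        have : h = h' := hub_unique hN hM hW hh hh'
        subst this
        exact (no_triangle hN hM hadj' hzu hadj).elim
    exact absurd ((key x hxu hx).trans (key y hyu hy).symm) hxy

/-- The invariant is preserved by one step of the `W`-frozen dynamics. -/
lemma inv_preserved (hN : 4 ≤ N) (hM : 4 ≤ M)
    (p1 p2 p3 p4 : ℝ) (h31 : p3 > p1) (h14 : p1 > p4) (h42 : p4 > p2)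
    {W : Finset (Node N M)} (hW : W.card ≤ 3)
    {S S' : Config N M} (hInv : Inv W S)
    (hstep : S' ∈ RsetW p1 p2 p3 p4 (↑W) S) : Inv W S' := by
  intro v hv
  by_cases hvW : v ∈ W
  · exact Or.inl hvW
  rcases hstep.2 v hvW with heq | ⟨u, hadj, heq, hlt⟩
  · exact hInv v (heq ▸ hv)
  · have hu : S u = Strat.C := heq ▸ hv
    cases hSv : S v with
    | C => exact hInv v hSv
    | D =>
      have hvne : S v ≠ Strat.C := by rw [hSv]; exact fun h => Strat.noConfusion h
      have hcnt := count_lt p1 p2 p3 p4 h31 h14 h42 hvne hu hlt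
      have h1 : 1 ≤ coopCount S v := coopCount_pos hadj hu
      obtain ⟨x, y, hxy, hxu, hyu, hx, hy⟩ := two_coop_neighbors (S := S) (u := u) (by omega)
      exact Or.inr ⟨u, hub_of_two hN hM hW hInv hu hxy hxu hyu hx hy, hadj⟩

/-- A configuration satisfying the invariant is not all-C (since `N*M ≥ 16 > 15`). -/
lemma inv_not_allC (hN : 4 ≤ N) (hM : 4 ≤ M)
    {W : Finset (Node N M)} (hW : W.card ≤ 3)
    {S : Config N M} (hInv : Inv W S) : S ≠ (fun _ => Strat.C) := by
  intro hall
  haveI : NeZero N := ⟨by omega⟩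
  haveI : NeZero M := ⟨by omega⟩
  set big : Finset (Node N M) := W.biUnion (fun w => insert w (neighbors w)) with hbig
  have hsub : (Finset.univ : Finset (Node N M)) ⊆ big := by
    intro v _
    have hv : S v = Strat.C := congrFun hall v
    rcases hInv v hv with h | ⟨w, hw, hadj⟩
    · exact Finset.mem_biUnion.mpr ⟨v, h, Finset.mem_insert_self _ _⟩
    · refine Finset.mem_biUnion.mpr ⟨w, hw.1, Finset.mem_insert.mpr (Or.inr ?_)⟩
      exact mem_neighbors_iff.mpr (adj_symm hadj)
  have hcard5 : ∀ w : Node N M, (insert w (neighbors w)).card ≤ 5 := by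
    intro w
    have h4 : (neighbors w).card ≤ 4 := card_neighbors_le w
    exact (Finset.card_insert_le _ _).trans (by omega)
  have hb : big.card ≤ 15 := by
    refine (Finset.card_biUnion_le).trans ?_
    calc ∑ w ∈ W, (insert w (neighbors w)).card ≤ ∑ _w ∈ W, 5 :=
          Finset.sum_le_sum (fun w _ => hcard5 w)
      _ = W.card * 5 := by rw [Finset.sum_const, smul_eq_mul]
      _ ≤ 15 := by omega
  have huniv : (Finset.univ : Finset (Node N M)).card = N * M := by
    rw [Finset.card_univ, Fintype.card_prod, ZMod.card, ZMod.card]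
  have h16 : 16 ≤ N * M := le_trans (by omega) (Nat.mul_le_mul hN hM)
  have := Finset.card_le_card hsub
  omega

end Aux14

/-- with `N, M ≥ 4`, prisoner's dilemma payoffs, at most `3`
nodes frozen at cooperation and all other nodes initially defecting, no
trajectory of the `W`-frozen imitation dynamics ever reaches total cooperation. -/
theorem few_frozen_coop_insufficient {N M : ℕ} (hN : 4 ≤ N) (hM : 4 ≤ M)
    (p1 p2 p3 p4 : ℝ) (h31 : p3 > p1) (h14 : p1 > p4) (h42 : p4 > p2)
    (W : Finset (Node N M)) (hW : W.card ≤ 3)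
    (S0 : Config N M)
    (hS0 : ∀ v : Node N M, (v ∈ W → S0 v = Strat.C) ∧ (v ∉ W → S0 v = Strat.D))
    (Sseq : ℕ → Config N M) (h0 : Sseq 0 = S0)
    (hstep : ∀ t : ℕ, Sseq (t + 1) ∈ RsetW p1 p2 p3 p4 (↑W) (Sseq t)) :
    ∀ t : ℕ, Sseq t ≠ (fun _ => Strat.C : Config N M) := by
  have hinv : ∀ t, Inv W (Sseq t) := by
    intro t
    induction t with
    | zero =>
      rw [h0]
      intro v hv
      left
      by_contra hvW
      rw [(hS0 v).2 hvW] at hv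
      exact Strat.noConfusion hv
    | succ t ih =>
      exact inv_preserved hN hM p1 p2 p3 p4 h31 h14 h42 hW ih (hstep t)
  intro t
  exact inv_not_allC hN hM hW (hinv t)

end EvolGame
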